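/- Let q: Θ → ℝ be twice continuously differentiable in a parameter θ with ∂_θ q(θ*) = 0 and ∂²_θ q strongly concave (∂²_θ q ≤ -γ < 0) on a neighborhood, and suppose the population update M satisfies |∂_θ q(M(θ))| ≤ κ γ |θ - θ*| with 0 < κ < 1. Then |M(θ) - θ*| ≤ κ |θ - θ*| for θ in the neighborhood (one-dimensional parameter case). -/
import Mathlib

/-- MVT lower bound: strong concavity of `q` (i.e. `q'' ≤ -γ`) forces `q'` to change
by at least `γ` times the distance between two points of a convex set. -/
lemma deriv_gap (I : Set ℝ) (hI : Convex ℝ I) (q' q'' : ℝ → ℝ) (γ : ℝ)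
    (hd2 : ∀ θ ∈ I, HasDerivAt q' (q'' θ) θ)
    (hγ : 0 < γ) (hconc : ∀ θ ∈ I, q'' θ ≤ -γ) :
    ∀ x ∈ I, ∀ y ∈ I, x < y → γ * (y - x) ≤ |q' y - q' x| := by
  intro x hx y hy hxy
  have hsub : Set.Icc x y ⊆ I := hI.ordConnected.out hx hy
  obtain ⟨c, hc, hceq⟩ := exists_hasDerivAt_eq_slope q' q'' hxy
    (fun t ht => (hd2 t (hsub ht)).continuousAt.continuousWithinAt)
    (fun t ht => hd2 t (hsub (Set.Ioo_subset_Icc_self ht)))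
  have hcI : c ∈ I := hsub (Set.Ioo_subset_Icc_self hc)
  have h1 : q'' c ≤ -γ := hconc c hcI
  have h2 : (q' y - q' x) / (y - x) ≤ -γ := hceq ▸ h1
  have hyx : 0 < y - x := by linarith
  have h3 : q' y - q' x ≤ -γ * (y - x) := by
    have := (div_le_iff₀ hyx).mp h2
    linarith
  have h4 : γ * (y - x) ≤ -(q' y - q' x) := by nlinarith
  calc γ * (y - x) ≤ -(q' y - q' x) := h4
    _ ≤ |q' y - q' x| := neg_le_abs _

/-- One-dimensional EM contraction: if `q` is twice differentiable on an interval `I`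
containing a stationary point `θ*` with `q'' ≤ -γ < 0` on `I` (strong concavity), and the
population update map `M : I → I` satisfies `|q'(M θ)| ≤ κ γ |θ - θ*|` with `0 < κ < 1`,
then `|M θ - θ*| ≤ κ |θ - θ*|` for all `θ ∈ I`. -/
theorem em_population_contraction (I : Set ℝ) (hI : Convex ℝ I)
    (q q' q'' : ℝ → ℝ) (M : ℝ → ℝ) (θstar γ κ : ℝ)
    (hθstar : θstar ∈ I)
    (hd1 : ∀ θ ∈ I, HasDerivAt q (q' θ) θ)
    (hd2 : ∀ θ ∈ I, HasDerivAt q' (q'' θ) θ)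
    (hγ : 0 < γ) (hκ0 : 0 < κ) (hκ1 : κ < 1)
    (hconc : ∀ θ ∈ I, q'' θ ≤ -γ)
    (hmap : ∀ θ ∈ I, M θ ∈ I)
    (hstat : q' θstar = 0)
    (hcontract : ∀ θ ∈ I, |q' (M θ)| ≤ κ * γ * |θ - θstar|) :
    ∀ θ ∈ I, |M θ - θstar| ≤ κ * |θ - θstar| := by
  intro θ hθ
  have hM : M θ ∈ I := hmap θ hθ
  have key : γ * |M θ - θstar| ≤ |q' (M θ)| := by
    rcases lt_trichotomy (M θ) θstar with h | h | h
    · have := deriv_gap I hI q' q'' γ hd2 hγ hconc (M θ) hM θstar hθstar h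
      rw [hstat] at this
      rw [abs_of_neg (by linarith : M θ - θstar < 0)]
      simpa using this
    · simp [h, abs_nonneg]
    · have := deriv_gap I hI q' q'' γ hd2 hγ hconc θstar hθstar (M θ) hM h
      rw [hstat, sub_zero] at this
      rw [abs_of_pos (by linarith : 0 < M θ - θstar)]
      linarith
  have h2 := hcontract θ hθ
  have : γ * |M θ - θstar| ≤ γ * (κ * |θ - θstar|) := by
    calc γ * |M θ - θstar| ≤ κ * γ * |θ - θstar| := le_trans key h2
      _ = γ * (κ * |θ - θstar|) := by ring
  exact le_of_mul_le_mul_left this hγ
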